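/- Let $\rho, \sigma, \psi$ be positive semidefinite matrices on $\mathbb{C}^d$ with $\mathrm{tr}(\rho)=1$, $\mathrm{tr}(\psi) < 1$, and $\rho \leq \sigma + \psi$. Then there exists a positive semidefinite matrix $\tilde\rho$ with $\mathrm{tr}(\tilde\rho)=1$ such that $\tilde\rho \leq (1 - \mathrm{tr}(\psi))^{-1} \sigma$ and $F(\rho, \tilde\rho) \geq 1 - \mathrm{tr}(\psi)$, where $F(\rho,\tilde\rho) = \mathrm{tr}|\sqrt{\rho}\sqrt{\tilde\rho}|$ is the fidelity. -/

import Mathlib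

open Matrix ComplexOrder

attribute [local instance] Classical.propDecidable

/-- The positive semidefinite square root of a positive semidefinite matrix
(the definition `Matrix.PosSemidef.sqrt` of the older Mathlib, since removed). -/
noncomputable def Matrix.PosSemidef.sqrt {n 𝕜 : Type*} [Fintype n] [DecidableEq n] [RCLike 𝕜]
    {A : Matrix n n 𝕜} (hA : A.PosSemidef) : Matrix n n 𝕜 :=
  hA.1.eigenvectorUnitary.1 * diagonal ((↑) ∘ (√·) ∘ hA.1.eigenvalues) *
  (star hA.1.eigenvectorUnitary : Matrix n n 𝕜)

/-- Fidelity of two positive semidefinite matrices: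
`F(ρ,τ) = tr √(√ρ τ √ρ)` (junk value `0` if an argument is not PSD). -/
noncomputable def fid {d : ℕ} (ρ τ : Matrix (Fin d) (Fin d) ℂ) : ℝ :=
  if h : ρ.PosSemidef ∧ τ.PosSemidef then
    ((h.2.mul_mul_conjTranspose_same h.1.sqrt).sqrt).trace.re
  else 0

/-! Put `τ = σ + ψ` and `Δ = σ^{1/2} τ^{-1/2}`, with the pseudo-inverse on the support of `τ`,
and take `ρ' = Δ ρ Δᴴ / tr (Δ ρ Δᴴ)`. Since `ρ ≤ τ`, `Δ ρ Δᴴ ≤ Δ τ Δᴴ = σ`; with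
`R = τ^{-1/2} ρ τ^{-1/2} ≤ 1` one has `tr (Δ ρ Δᴴ) = tr (R σ) ∈ [1 - tr ψ, 1]`.
For the fidelity, `√ρ (Δ ρ Δᴴ) √ρ = M Mᴴ` with `M = √ρ Δ √ρ`, and a polar decomposition gives
`tr √(M Mᴴ) ≥ Re tr M = Re tr (ρ Δ) = Re tr (R τ^{1/2} σ^{1/2})`. This is at least `1 - tr ψ` by
operator monotonicity of the square root, `σ^{1/2} ≤ τ^{1/2}`, and the identity
`τ^{1/2} σ^{1/2} + σ^{1/2} τ^{1/2} = τ + σ - (τ^{1/2} - σ^{1/2})²`. -/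

section

open scoped MatrixOrder Matrix.Norms.L2Operator

namespace Matrix

variable {n : Type*} [Fintype n]

theorem conjTranspose_eq_self_of_nonneg {A : Matrix n n ℂ} (hA : 0 ≤ A) : Aᴴ = A :=
  (IsSelfAdjoint.of_nonneg hA).star_eq

theorem ofReal_re_trace_of_nonneg {A : Matrix n n ℂ} (hA : 0 ≤ A) :
    (A.trace.re : ℂ) = A.trace :=
  Complex.conj_eq_iff_re.mp <| by
    rw [← Complex.star_def, ← trace_conjTranspose, conjTranspose_eq_self_of_nonneg hA]

variable [DecidableEq n]

theorem PosSemidef.sqrt_eq_cfcSqrt {A : Matrix n n ℂ} (hA : A.PosSemidef) :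
    hA.sqrt = CFC.sqrt A := by
  rw [CFC.sqrt_eq_real_sqrt A hA.nonneg, cfcₙ_eq_cfc, hA.1.cfc_eq]
  rfl

theorem cfcSqrt_smul {A : Matrix n n ℂ} (hA : 0 ≤ A) {c : ℝ} (hc : 0 ≤ c) :
    CFC.sqrt (c • A) = √c • CFC.sqrt A :=
  (CFC.sqrt_eq_iff _ _ (smul_nonneg hc hA)
    (smul_nonneg (Real.sqrt_nonneg c) (CFC.sqrt_nonneg A))).mpr <| by
      rw [smul_mul_smul_comm, Real.mul_self_sqrt hc, CFC.sqrt_mul_sqrt_self A hA]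

theorem trace_mul_nonneg {A B : Matrix n n ℂ} (hA : 0 ≤ A) (hB : 0 ≤ B) :
    0 ≤ (A * B).trace := by
  rw [← CFC.sqrt_mul_sqrt_self A hA, mul_assoc, trace_mul_comm]
  exact (nonneg_iff_posSemidef.mp
    (conjugate_nonneg_of_nonneg hB (CFC.sqrt_nonneg A))).trace_nonneg

theorem re_trace_mul_le_of_le {A B C : Matrix n n ℂ} (hAB : A ≤ B) (hC : 0 ≤ C) :
    (A * C).trace.re ≤ (B * C).trace.re := by
  have h := Complex.re_le_re (trace_mul_nonneg (sub_nonneg.mpr hAB) hC)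
  rw [sub_mul, trace_sub, Complex.sub_re, Complex.zero_re] at h
  linarith

theorem re_trace_sq_sub_le {X Y : Matrix n n ℂ} (hX : 0 ≤ X) (hXY : X ≤ Y) :
    ((Y - X) * (Y - X)).trace.re ≤ (Y * Y).trace.re - (X * X).trace.re := by
  have hcross := Complex.re_le_re (trace_mul_nonneg hX (sub_nonneg.mpr hXY))
  have hexp : Y * Y = (Y - X) * (Y - X) + X * (Y - X) + (Y - X) * X + X * X := by noncomm_ring
  rw [hexp, trace_add, trace_add, trace_add, trace_mul_comm (Y - X) X]
  simp only [Complex.add_re, Complex.zero_re] at hcross ⊢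
  linarith

/-- With `D = Y - X ≥ 0`, use `Y X + X Y = Y² + X² - D²` and `tr (R D²) ≤ tr D² ≤ tr Y² - tr X²`. -/
theorem re_trace_mul_sq_add_sub_le {R X Y : Matrix n n ℂ} (hR : 0 ≤ R) (hR1 : R ≤ 1)
    (hX : 0 ≤ X) (hXY : X ≤ Y) :
    (R * (Y * Y)).trace.re + (R * (X * X)).trace.re - ((Y * Y).trace.re - (X * X).trace.re)
      ≤ 2 * (R * (Y * X)).trace.re := by
  have hsymm : (R * (X * Y)).trace.re = (R * (Y * X)).trace.re := by
    rw [← Complex.conj_re, ← Complex.star_def, ← trace_conjTranspose, conjTranspose_mul,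
      conjTranspose_mul, conjTranspose_eq_self_of_nonneg hR, conjTranspose_eq_self_of_nonneg hX,
      conjTranspose_eq_self_of_nonneg (hX.trans hXY), ← mul_assoc, trace_mul_comm, mul_assoc]
  have hD : 0 ≤ (Y - X) * (Y - X) := by
    simpa only [star_eq_conjTranspose, conjTranspose_eq_self_of_nonneg (sub_nonneg.mpr hXY)]
      using star_mul_self_nonneg (Y - X)
  have hRD := re_trace_mul_le_of_le hR1 hD
  have hexp : R * (Y * X) + R * (X * Y) =
      R * (Y * Y) + R * (X * X) - R * ((Y - X) * (Y - X)) := by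
    noncomm_ring
  have htr := congrArg (fun M => M.trace.re) hexp
  simp only [trace_add, trace_sub, Complex.add_re, Complex.sub_re, one_mul] at htr hRD
  linarith [re_trace_sq_sub_le hX hXY]

theorem cfc_mul_cfc (f g : ℝ → ℝ) (A : Matrix n n ℂ) :
    cfc f A * cfc g A = cfc (fun x => f x * g x) A :=
  (cfc_mul f g A ((Set.toFinite _).continuousOn f) ((Set.toFinite _).continuousOn g)).symm

/-- For Hermitian `A`, the Moore–Penrose pseudo-inverse: `cfc` inverts the nonzero eigenvalues
and keeps the kernel, as `(0 : ℝ)⁻¹ = 0`. -/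
noncomputable def pinv (A : Matrix n n ℂ) : Matrix n n ℂ := cfc (fun x : ℝ => x⁻¹) A

section PseudoInverse

variable {A : Matrix n n ℂ}

theorem isSelfAdjoint_pinv : IsSelfAdjoint (pinv A) :=
  cfc_predicate _ A

theorem conjTranspose_pinv : (pinv A)ᴴ = pinv A :=
  isSelfAdjoint_pinv.star_eq

theorem pinv_mul_comm (hA : IsSelfAdjoint A) : pinv A * A = A * pinv A := by
  unfold pinv
  nth_rw 2 3 [← cfc_id' ℝ A]
  rw [cfc_mul_cfc, cfc_mul_cfc]
  exact cfc_congr fun x _ => mul_comm _ _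

theorem conjTranspose_mul_pinv (hA : IsSelfAdjoint A) : (A * pinv A)ᴴ = A * pinv A := by
  rw [conjTranspose_mul, conjTranspose_pinv, ← star_eq_conjTranspose, hA.star_eq,
    pinv_mul_comm hA]

theorem mul_pinv_mul_self (hA : IsSelfAdjoint A) : A * pinv A * A = A := by
  unfold pinv
  nth_rw 1 3 4 [← cfc_id' ℝ A]
  rw [cfc_mul_cfc, cfc_mul_cfc]
  exact cfc_congr fun x _ => mul_inv_mul_cancel x

theorem pinv_mul_mul_self_mul_pinv (hA : IsSelfAdjoint A) :
    pinv A * (A * A) * pinv A = A * pinv A := by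
  unfold pinv
  nth_rw 2 3 5 [← cfc_id' ℝ A]
  rw [cfc_mul_cfc, cfc_mul_cfc, cfc_mul_cfc, cfc_mul_cfc]
  refine cfc_congr fun x _ => ?_
  rcases eq_or_ne x 0 with rfl | hx
  · simp
  · field_simp

theorem mul_pinv_le_one (hA : IsSelfAdjoint A) : A * pinv A ≤ 1 := by
  unfold pinv
  nth_rw 1 [← cfc_id' ℝ A]
  rw [cfc_mul_cfc]
  refine cfc_le_one _ A fun x _ => ?_
  rcases eq_or_ne x 0 with rfl | hx
  · simp
  · simp [hx]

/-- `A * pinv A` is the orthogonal projection onto the range of `A`, which contains that of `Yᴴ`. -/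
theorem mul_mul_pinv_of_conjTranspose_mul_le (hA : IsSelfAdjoint A) {Y : Matrix n n ℂ}
    (hY : Yᴴ * Y ≤ A * A) : Y * (A * pinv A) = Y := by
  set E := 1 - A * pinv A
  have hE : Eᴴ = E := by rw [conjTranspose_sub, conjTranspose_one, conjTranspose_mul_pinv hA]
  have hAE : A * E = 0 := by
    rw [mul_sub, mul_one, ← mul_assoc, mul_assoc A, ← pinv_mul_comm hA, ← mul_assoc,
      mul_pinv_mul_self hA, sub_self]
  have hYE : (Y * E)ᴴ * (Y * E) = 0 := by
    refine le_antisymm ?_ (star_mul_self_nonneg _)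
    calc (Y * E)ᴴ * (Y * E) = star E * (Yᴴ * Y) * E := by
          rw [conjTranspose_mul, star_eq_conjTranspose]; noncomm_ring
      _ ≤ star E * (A * A) * E := star_left_conjugate_le_conjugate hY E
      _ = 0 := by rw [star_eq_conjTranspose, hE, mul_assoc, mul_assoc, hAE, mul_zero, mul_zero]
  have hYE' := conjTranspose_mul_self_eq_zero.mp hYE
  rwa [mul_sub, mul_one, sub_eq_zero, eq_comm] at hYE'

theorem mul_mul_pinv_of_le (hA : IsSelfAdjoint A) {ρ : Matrix n n ℂ} (hρ : 0 ≤ ρ)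
    (hρA : ρ ≤ A * A) : ρ * (A * pinv A) = ρ := by
  have hsqrt : (CFC.sqrt ρ)ᴴ * CFC.sqrt ρ = ρ := by
    rw [conjTranspose_eq_self_of_nonneg (CFC.sqrt_nonneg ρ), CFC.sqrt_mul_sqrt_self ρ hρ]
  rw [← CFC.sqrt_mul_sqrt_self ρ hρ, mul_assoc,
    mul_mul_pinv_of_conjTranspose_mul_le hA (by rwa [hsqrt])]

theorem mul_pinv_mul_of_le (hA : IsSelfAdjoint A) {ρ : Matrix n n ℂ} (hρ : 0 ≤ ρ)
    (hρA : ρ ≤ A * A) : A * pinv A * ρ = ρ := by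
  have h := congrArg conjTranspose (mul_mul_pinv_of_le hA hρ hρA)
  rwa [conjTranspose_mul, conjTranspose_mul_pinv hA, conjTranspose_eq_self_of_nonneg hρ] at h

end PseudoInverse

theorem exists_contraction_sqrt_mul_eq (M : Matrix n n ℂ) :
    ∃ W : Matrix n n ℂ, W * Wᴴ ≤ 1 ∧ CFC.sqrt (M * Mᴴ) * W = M := by
  set N := CFC.sqrt (M * Mᴴ)
  have hN : IsSelfAdjoint N := (CFC.sqrt_nonneg _).isSelfAdjoint
  have hNN : N * N = M * Mᴴ := CFC.sqrt_mul_sqrt_self _ (mul_star_self_nonneg M)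
  have hPM : N * pinv N * M = M := by
    have h := mul_mul_pinv_of_conjTranspose_mul_le hN (Y := Mᴴ)
      (by rw [conjTranspose_conjTranspose, hNN])
    simpa only [conjTranspose_mul, conjTranspose_conjTranspose, conjTranspose_mul_pinv hN]
      using congrArg conjTranspose h
  refine ⟨pinv N * M, ?_, by rw [← mul_assoc, hPM]⟩
  calc pinv N * M * (pinv N * M)ᴴ = pinv N * (N * N) * pinv N := by
        rw [conjTranspose_mul, conjTranspose_pinv, hNN]; noncomm_ring
    _ = N * pinv N := pinv_mul_mul_self_mul_pinv hN
    _ ≤ 1 := mul_pinv_le_one hN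

/-- With `N W = M` and `W Wᴴ ≤ 1`, expand `0 ≤ tr (N (1 - W) (1 - W)ᴴ)`. -/
theorem re_trace_le_re_trace_sqrt_mul_conjTranspose (M : Matrix n n ℂ) :
    M.trace.re ≤ (CFC.sqrt (M * Mᴴ)).trace.re := by
  obtain ⟨W, hW, hNW⟩ := exists_contraction_sqrt_mul_eq M
  set N := CFC.sqrt (M * Mᴴ)
  have hN : 0 ≤ N := CFC.sqrt_nonneg _
  have hpos := Complex.re_le_re (trace_mul_nonneg hN (mul_star_self_nonneg (1 - W)))
  have hWW : (N * (W * Wᴴ)).trace.re ≤ N.trace.re := by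
    simpa only [trace_mul_comm N, one_mul] using re_trace_mul_le_of_le hW hN
  have hstar : (N * Wᴴ).trace = star M.trace := by
    rw [← hNW, ← trace_conjTranspose, conjTranspose_mul, conjTranspose_eq_self_of_nonneg hN,
      trace_mul_comm]
  have hexp : N * ((1 - W) * star (1 - W)) = N - N * W - N * Wᴴ + N * (W * Wᴴ) := by
    rw [star_eq_conjTranspose, conjTranspose_sub, conjTranspose_one]; noncomm_ring
  rw [hexp, trace_add, trace_sub, trace_sub, hNW, hstar] at hpos
  simp only [Complex.add_re, Complex.sub_re, Complex.star_def, Complex.conj_re,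
    Complex.zero_re] at hpos
  linarith

section Smoothing

variable {ρ σ τ : Matrix n n ℂ}

theorem pinv_conj_le_one {Q : Matrix n n ℂ} (hQ : IsSelfAdjoint Q) (hρ : ρ ≤ Q * Q) :
    pinv Q * ρ * pinv Q ≤ 1 :=
  calc pinv Q * ρ * pinv Q ≤ pinv Q * (Q * Q) * pinv Q :=
        IsSelfAdjoint.conjugate_le_conjugate hρ isSelfAdjoint_pinv
    _ = Q * pinv Q := pinv_mul_mul_self_mul_pinv hQ
    _ ≤ 1 := mul_pinv_le_one hQ

theorem mul_pinv_conj_mul {Q : Matrix n n ℂ} (hQ : IsSelfAdjoint Q) (hρ0 : 0 ≤ ρ)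
    (hρ : ρ ≤ Q * Q) : Q * (pinv Q * ρ * pinv Q) * Q = ρ :=
  calc Q * (pinv Q * ρ * pinv Q) * Q = Q * pinv Q * ρ * (pinv Q * Q) := by noncomm_ring
    _ = ρ := by
        rw [pinv_mul_comm hQ, mul_pinv_mul_of_le hQ hρ0 hρ, mul_mul_pinv_of_le hQ hρ0 hρ]

theorem trace_pinv_conj_mul {Q : Matrix n n ℂ} (hQ : IsSelfAdjoint Q) (hρ0 : 0 ≤ ρ)
    (hρ : ρ ≤ Q * Q) : (pinv Q * ρ * pinv Q * (Q * Q)).trace = ρ.trace :=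
  calc (pinv Q * ρ * pinv Q * (Q * Q)).trace = (pinv Q * (ρ * (pinv Q * (Q * Q)))).trace := by
        simp only [mul_assoc]
    _ = (ρ * (pinv Q * (Q * Q) * pinv Q)).trace := by rw [trace_mul_comm]; simp only [mul_assoc]
    _ = ρ.trace := by rw [pinv_mul_mul_self_mul_pinv hQ, mul_mul_pinv_of_le hQ hρ0 hρ]

noncomputable def sqrtMulPinvSqrt (σ τ : Matrix n n ℂ) : Matrix n n ℂ :=
  CFC.sqrt σ * pinv (CFC.sqrt τ)

theorem sqrtMulPinvSqrt_conj_le (hρ : ρ ≤ τ) (hσ : 0 ≤ σ) (hστ : σ ≤ τ) :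
    sqrtMulPinvSqrt σ τ * ρ * (sqrtMulPinvSqrt σ τ)ᴴ ≤ σ := by
  set X := CFC.sqrt σ
  set Q := CFC.sqrt τ
  have hQ : IsSelfAdjoint Q := (CFC.sqrt_nonneg τ).isSelfAdjoint
  have hX : Xᴴ = X := conjTranspose_eq_self_of_nonneg (CFC.sqrt_nonneg σ)
  have hXX : X * X = σ := CFC.sqrt_mul_sqrt_self σ hσ
  have hQQ : Q * Q = τ := CFC.sqrt_mul_sqrt_self τ (hσ.trans hστ)
  have hXP : X * (Q * pinv Q) = X :=
    mul_mul_pinv_of_conjTranspose_mul_le hQ (by rwa [hX, hXX, hQQ])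
  calc sqrtMulPinvSqrt σ τ * ρ * (sqrtMulPinvSqrt σ τ)ᴴ
      ≤ sqrtMulPinvSqrt σ τ * τ * (sqrtMulPinvSqrt σ τ)ᴴ :=
        star_right_conjugate_le_conjugate hρ _
    _ = X * (pinv Q * (Q * Q) * pinv Q) * X := by
        rw [sqrtMulPinvSqrt, conjTranspose_mul, conjTranspose_pinv, hX, hQQ]; noncomm_ring
    _ = σ := by rw [pinv_mul_mul_self_mul_pinv hQ, hXP, hXX]

theorem trace_sqrtMulPinvSqrt_conj (hσ : 0 ≤ σ) :
    (sqrtMulPinvSqrt σ τ * ρ * (sqrtMulPinvSqrt σ τ)ᴴ).trace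
      = (pinv (CFC.sqrt τ) * ρ * pinv (CFC.sqrt τ) * σ).trace := by
  set X := CFC.sqrt σ
  set S := pinv (CFC.sqrt τ)
  rw [sqrtMulPinvSqrt, conjTranspose_mul, conjTranspose_pinv,
    conjTranspose_eq_self_of_nonneg (CFC.sqrt_nonneg σ),
    show X * S * ρ * (S * X) = X * (S * ρ * S * X) by noncomm_ring, trace_mul_comm,
    mul_assoc _ X, CFC.sqrt_mul_sqrt_self σ hσ]

theorem re_trace_sqrtMulPinvSqrt_conj_le (hρ0 : 0 ≤ ρ) (hρ : ρ ≤ τ) (hσ : 0 ≤ σ)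
    (hστ : σ ≤ τ) :
    (sqrtMulPinvSqrt σ τ * ρ * (sqrtMulPinvSqrt σ τ)ᴴ).trace.re ≤ ρ.trace.re := by
  set Q := CFC.sqrt τ
  have hQ : IsSelfAdjoint Q := (CFC.sqrt_nonneg τ).isSelfAdjoint
  have hQQ : Q * Q = τ := CFC.sqrt_mul_sqrt_self τ (hσ.trans hστ)
  have hR : 0 ≤ pinv Q * ρ * pinv Q := IsSelfAdjoint.conjugate_nonneg hρ0 isSelfAdjoint_pinv
  rw [trace_sqrtMulPinvSqrt_conj hσ, ← trace_pinv_conj_mul hQ hρ0 (hQQ ▸ hρ), hQQ,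
    trace_mul_comm _ σ, trace_mul_comm _ τ]
  exact re_trace_mul_le_of_le hστ hR

theorem re_trace_sqrtMulPinvSqrt_conj_ge (hρ0 : 0 ≤ ρ) (hρ : ρ ≤ τ) (hσ : 0 ≤ σ)
    (hστ : σ ≤ τ) :
    ρ.trace.re - (τ - σ).trace.re
      ≤ (sqrtMulPinvSqrt σ τ * ρ * (sqrtMulPinvSqrt σ τ)ᴴ).trace.re := by
  set Q := CFC.sqrt τ
  have hQ : IsSelfAdjoint Q := (CFC.sqrt_nonneg τ).isSelfAdjoint
  have hQQ : Q * Q = τ := CFC.sqrt_mul_sqrt_self τ (hσ.trans hστ)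
  have hsub := re_trace_mul_le_of_le (pinv_conj_le_one hQ (hQQ ▸ hρ)) (sub_nonneg.mpr hστ)
  rw [mul_sub, trace_sub, Complex.sub_re, one_mul] at hsub
  rw [trace_sqrtMulPinvSqrt_conj hσ, ← trace_pinv_conj_mul hQ hρ0 (hQQ ▸ hρ), hQQ]
  linarith

theorem re_trace_mul_sqrtMulPinvSqrt_ge (hρ0 : 0 ≤ ρ) (hρ : ρ ≤ τ) (hσ : 0 ≤ σ)
    (hστ : σ ≤ τ) :
    ρ.trace.re - (τ - σ).trace.re ≤ (ρ * sqrtMulPinvSqrt σ τ).trace.re := by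
  set X := CFC.sqrt σ
  set Q := CFC.sqrt τ
  set R := pinv Q * ρ * pinv Q
  have hQ : IsSelfAdjoint Q := (CFC.sqrt_nonneg τ).isSelfAdjoint
  have hX : Xᴴ = X := conjTranspose_eq_self_of_nonneg (CFC.sqrt_nonneg σ)
  have hXX : X * X = σ := CFC.sqrt_mul_sqrt_self σ hσ
  have hQQ : Q * Q = τ := CFC.sqrt_mul_sqrt_self τ (hσ.trans hστ)
  have hXP : X * (Q * pinv Q) = X :=
    mul_mul_pinv_of_conjTranspose_mul_le hQ (by rwa [hX, hXX, hQQ])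
  have htr : (ρ * sqrtMulPinvSqrt σ τ).trace = (R * (Q * X)).trace :=
    calc (ρ * sqrtMulPinvSqrt σ τ).trace = (Q * R * Q * (X * pinv Q)).trace := by
          rw [mul_pinv_conj_mul hQ hρ0 (hQQ ▸ hρ), sqrtMulPinvSqrt]
      _ = (R * (Q * (X * (pinv Q * Q)))).trace := by
          rw [show Q * R * Q * (X * pinv Q) = Q * (R * Q * X * pinv Q) by noncomm_ring,
            trace_mul_comm]
          simp only [mul_assoc]
      _ = (R * (Q * X)).trace := by rw [pinv_mul_comm hQ, hXP]
  have hkey := re_trace_mul_sq_add_sub_le (R := R)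
    (IsSelfAdjoint.conjugate_nonneg hρ0 isSelfAdjoint_pinv) (pinv_conj_le_one hQ (hQQ ▸ hρ))
    (CFC.sqrt_nonneg σ) (CFC.sqrt_le_sqrt σ τ hστ)
  rw [trace_pinv_conj_mul hQ hρ0 (hQQ ▸ hρ), hQQ, hXX] at hkey
  have hlow := re_trace_sqrtMulPinvSqrt_conj_ge hρ0 hρ hσ hστ
  rw [trace_sqrtMulPinvSqrt_conj hσ, trace_sub, Complex.sub_re] at hlow
  rw [htr, trace_sub, Complex.sub_re]
  linarith

end Smoothing

end Matrix

variable {d : ℕ}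

theorem fid_eq_of_nonneg {ρ τ : Matrix (Fin d) (Fin d) ℂ} (hρ : 0 ≤ ρ) (hτ : 0 ≤ τ) :
    fid ρ τ = (CFC.sqrt (CFC.sqrt ρ * τ * CFC.sqrt ρ)).trace.re := by
  have h : ρ.PosSemidef ∧ τ.PosSemidef :=
    ⟨nonneg_iff_posSemidef.mp hρ, nonneg_iff_posSemidef.mp hτ⟩
  rw [fid, dif_pos h, PosSemidef.sqrt_eq_cfcSqrt, h.1.sqrt_eq_cfcSqrt,
    conjTranspose_eq_self_of_nonneg (CFC.sqrt_nonneg ρ)]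

theorem fid_smul_right {ρ τ : Matrix (Fin d) (Fin d) ℂ} (hρ : 0 ≤ ρ) (hτ : 0 ≤ τ) {c : ℝ}
    (hc : 0 ≤ c) : fid ρ (c • τ) = √c * fid ρ τ := by
  rw [fid_eq_of_nonneg hρ (smul_nonneg hc hτ), fid_eq_of_nonneg hρ hτ, mul_smul_comm,
    smul_mul_assoc, cfcSqrt_smul (conjugate_nonneg_of_nonneg hτ (CFC.sqrt_nonneg ρ)) hc,
    trace_smul, Complex.real_smul, Complex.re_ofReal_mul]

theorem re_trace_mul_le_fid {ρ : Matrix (Fin d) (Fin d) ℂ} (hρ : 0 ≤ ρ)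
    (Δ : Matrix (Fin d) (Fin d) ℂ) : (ρ * Δ).trace.re ≤ fid ρ (Δ * ρ * Δᴴ) := by
  set B := CFC.sqrt ρ
  have hB : Bᴴ = B := conjTranspose_eq_self_of_nonneg (CFC.sqrt_nonneg ρ)
  have hBB : B * B = ρ := CFC.sqrt_mul_sqrt_self ρ hρ
  have hM : B * (Δ * ρ * Δᴴ) * B = (B * Δ * B) * (B * Δ * B)ᴴ := by
    rw [← hBB]; simp only [conjTranspose_mul, hB]; noncomm_ring
  have htr : (B * Δ * B).trace = (ρ * Δ).trace := by rw [trace_mul_cycle, ← hBB]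
  rw [fid_eq_of_nonneg (τ := Δ * ρ * Δᴴ) hρ (star_right_conjugate_nonneg hρ Δ), hM, ← htr]
  exact re_trace_le_re_trace_sqrt_mul_conjTranspose _

end

/-- If `ρ ≤ σ + ψ` with `tr ρ = 1` and `tr ψ < 1`, then there is a state
`ρ' ≤ (1 - tr ψ)⁻¹ σ` with fidelity `F(ρ, ρ') ≥ 1 - tr ψ`. -/
theorem exists_state_le_of_le_add {d : ℕ} (ρ σ ψ : Matrix (Fin d) (Fin d) ℂ)
    (hρ : ρ.PosSemidef) (hσ : σ.PosSemidef) (hψ : ψ.PosSemidef)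
    (hρ1 : ρ.trace = 1) (hψ1 : ψ.trace.re < 1)
    (hle : (σ + ψ - ρ).PosSemidef) :
    ∃ ρ' : Matrix (Fin d) (Fin d) ℂ, ρ'.PosSemidef ∧ ρ'.trace = 1 ∧
      ((1 - ψ.trace.re)⁻¹ • σ - ρ').PosSemidef ∧
      1 - ψ.trace.re ≤ fid ρ ρ' := by
  open scoped MatrixOrder in
  have hρτ : ρ ≤ σ + ψ := le_iff.mpr hle
  have hστ : σ ≤ σ + ψ := le_add_of_nonneg_right hψ.nonneg
  have hρre : ρ.trace.re = 1 := by rw [hρ1, Complex.one_re]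
  have hτσ : (σ + ψ - σ).trace.re = ψ.trace.re := by rw [add_sub_cancel_left]
  set Δ := sqrtMulPinvSqrt σ (σ + ψ)
  set ω := Δ * ρ * Δᴴ
  have hω : 0 ≤ ω := star_right_conjugate_nonneg hρ.nonneg Δ
  set r := ω.trace.re
  have hr_ge : 1 - ψ.trace.re ≤ r := by
    simpa only [hρre, hτσ] using re_trace_sqrtMulPinvSqrt_conj_ge hρ.nonneg hρτ hσ.nonneg hστ
  have hr_le : r ≤ 1 := hρre ▸ re_trace_sqrtMulPinvSqrt_conj_le hρ.nonneg hρτ hσ.nonneg hστ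
  have hr : 0 < r := by linarith
  have hF : 1 - ψ.trace.re ≤ fid ρ ω := by
    refine le_trans ?_ (re_trace_mul_le_fid hρ.nonneg Δ)
    simpa only [hρre, hτσ] using re_trace_mul_sqrtMulPinvSqrt_ge hρ.nonneg hρτ hσ.nonneg hστ
  refine ⟨r⁻¹ • ω, nonneg_iff_posSemidef.mp (smul_nonneg (inv_nonneg.mpr hr.le) hω), ?_, ?_, ?_⟩
  · rw [trace_smul, ← ofReal_re_trace_of_nonneg hω, Complex.real_smul, ← Complex.ofReal_mul,
      inv_mul_cancel₀ hr.ne', Complex.ofReal_one]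
  · rw [← le_iff]
    calc r⁻¹ • ω ≤ r⁻¹ • σ := smul_le_smul_of_nonneg_left
          (sqrtMulPinvSqrt_conj_le hρτ hσ.nonneg hστ) (inv_nonneg.mpr hr.le)
      _ ≤ (1 - ψ.trace.re)⁻¹ • σ := smul_le_smul_of_nonneg_right
          (inv_anti₀ (by linarith) hr_ge) hσ.nonneg
  · rw [fid_smul_right hρ.nonneg hω (inv_nonneg.mpr hr.le)]
    have hc : 1 ≤ √r⁻¹ := Real.one_le_sqrt.mpr ((one_le_inv₀ hr).mpr hr_le)
    nlinarith
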